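/- arXiv:2307.13068 — 3 statements merged into one kernel-verified Lean document; each statement's English description precedes it below -/
import Mathlib

section
/- With f as in the backtracking-tree model, for any p ≥ 1 and sequences (n_i), (α_i) with n_i ≥ 2, α_i ≥ 1, f((n_1,α_1),…,(n_p,α_p)) ≤ 2(e−1)·∏_{i=1}^p α_i·n_i!. -/
open Nat Finset

/-- `a n = n! * ∑_{i=1}^{n-1} 1/i!` -/
noncomputable def a (n : ℕ) : ℝ := (n ! : ℝ) * ∑ i ∈ Finset.Icc 1 (n - 1), (1 : ℝ) / (i !)

/-- The variadic function `f`: `f [(n,α)] = α * a n` and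
`f ((n₁,α₁) :: t) = α₁ * (a n₁ + n₁! * f t)`. -/
noncomputable def f : List (ℕ × ℕ) → ℝ
  | [] => 0
  | x :: t => (x.2 : ℝ) * (a x.1 + ((x.1)! : ℝ) * f t)

lemma a_le (n : ℕ) : a n ≤ (Real.exp 1 - 1) * (n ! : ℝ) := by
  have hS : ∑ i ∈ Finset.Icc 1 (n - 1), (1 : ℝ) / (i !) ≤ Real.exp 1 - 1 := by
    have h1 : ∑ i ∈ Finset.range (n - 1 + 1), (1:ℝ) ^ i / (i !) ≤ Real.exp 1 :=
      Real.sum_le_exp_of_nonneg (by norm_num) _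
    have hr : Finset.range (n - 1 + 1) = insert 0 (Finset.Icc 1 (n - 1)) := by
      ext i; simp; omega
    rw [hr, Finset.sum_insert (by simp)] at h1
    norm_num at h1
    simp only [one_div] at h1 ⊢
    linarith
  calc a n ≤ (n ! : ℝ) * (Real.exp 1 - 1) :=
        mul_le_mul_of_nonneg_left hS (by positivity)
    _ = (Real.exp 1 - 1) * (n ! : ℝ) := mul_comm _ _

lemma exp_sub_one_pos : (0:ℝ) < Real.exp 1 - 1 := by
  have := Real.add_one_le_exp (1:ℝ)
  linarith

lemma prod_ge (L : List (ℕ × ℕ)) (h : ∀ x ∈ L, 2 ≤ x.1 ∧ 1 ≤ x.2) :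
    (2:ℝ) ^ L.length ≤ (L.map fun x => (x.2 : ℝ) * ((x.1)! : ℝ)).prod := by
  induction L with
  | nil => simp
  | cons x t ih =>
    simp only [List.map_cons, List.prod_cons, List.length_cons, pow_succ]
    have hx := h x List.mem_cons_self
    have h1 : (1:ℝ) ≤ (x.2 : ℝ) := by exact_mod_cast hx.2
    have h2 : (2:ℝ) ≤ ((x.1)! : ℝ) := by
      exact_mod_cast Nat.le_trans (by norm_num : 2 ≤ Nat.factorial 2) (Nat.factorial_le hx.1)
    have ht := ih (fun y hy => h y (List.mem_cons_of_mem x hy))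
    have hx2 : (2:ℝ) ≤ (x.2 : ℝ) * ((x.1)! : ℝ) := by nlinarith
    have hpos : (0:ℝ) ≤ (2:ℝ) ^ t.length := by positivity
    calc (2:ℝ) ^ t.length * 2
        ≤ ((t.map fun x => (x.2 : ℝ) * ((x.1)! : ℝ)).prod) * ((x.2 : ℝ) * ((x.1)! : ℝ)) :=
          mul_le_mul ht hx2 (by norm_num) (le_trans hpos ht)
      _ = (x.2 : ℝ) * ((x.1)! : ℝ) * (t.map fun x => (x.2 : ℝ) * ((x.1)! : ℝ)).prod := mul_comm _ _

lemma f_key (L : List (ℕ × ℕ)) (hL : L ≠ [])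
    (h : ∀ x ∈ L, 2 ≤ x.1 ∧ 1 ≤ x.2) :
    f L ≤ (Real.exp 1 - 1) * (2 - 2 / 2 ^ L.length) *
      (L.map fun x => (x.2 : ℝ) * ((x.1)! : ℝ)).prod := by
  induction L with
  | nil => exact absurd rfl hL
  | cons x t ih =>
    have hx := h x List.mem_cons_self
    have h1 : (1:ℝ) ≤ (x.2 : ℝ) := by exact_mod_cast hx.2
    have hfac : (0:ℝ) < ((x.1)! : ℝ) := by positivity
    have he := exp_sub_one_pos
    have han := a_le x.1
    cases t with
    | nil =>
      simp only [f, List.map_cons, List.map_nil, List.prod_cons, List.prod_nil,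
        List.length_cons, List.length_nil]
      norm_num
      nlinarith [mul_le_mul_of_nonneg_left han (le_trans zero_le_one h1)]
    | cons y s =>
      have htail : ∀ z ∈ y :: s, 2 ≤ z.1 ∧ 1 ≤ z.2 :=
        fun z hz => h z (List.mem_cons_of_mem x hz)
      have hft := ih (List.cons_ne_nil y s) htail
      have hPt := prod_ge (y :: s) htail
      set t := y :: s with hts
      set Pt := (t.map fun x => (x.2 : ℝ) * ((x.1)! : ℝ)).prod with hPtdef
      have h2p : (0:ℝ) < (2:ℝ) ^ t.length := by positivity
      have hhalf : (2:ℝ) / 2 ^ (t.length + 1) = 1 / 2 ^ t.length := by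
        rw [pow_succ]; field_simp
      have h4 : (1:ℝ) ≤ Pt * (1 / 2 ^ t.length) := by
        rw [mul_one_div]; exact (one_le_div h2p).mpr hPt
      have hkey : (1:ℝ) + (2 - 2 / 2 ^ t.length) * Pt
          ≤ (2 - 2 / 2 ^ (t.length + 1)) * Pt := by
        rw [hhalf]
        have hr : (2 - 1 / 2 ^ t.length) * Pt - (2 - 2 / 2 ^ t.length) * Pt
            = Pt * (1 / 2 ^ t.length) := by ring
        linarith [h4, hr]
      simp only [List.map_cons, List.prod_cons, List.length_cons]
      calc (x.2 : ℝ) * (a x.1 + ((x.1)! : ℝ) * f t)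
          ≤ (x.2 : ℝ) * ((Real.exp 1 - 1) * ((x.1)! : ℝ)
              + ((x.1)! : ℝ) * ((Real.exp 1 - 1) * (2 - 2 / 2 ^ t.length) * Pt)) := by
            apply mul_le_mul_of_nonneg_left _ (by linarith)
            exact add_le_add han (mul_le_mul_of_nonneg_left hft hfac.le)
        _ = ((Real.exp 1 - 1) * ((x.2 : ℝ) * ((x.1)! : ℝ)))
              * (1 + (2 - 2 / 2 ^ t.length) * Pt) := by ring
        _ ≤ ((Real.exp 1 - 1) * ((x.2 : ℝ) * ((x.1)! : ℝ)))
              * ((2 - 2 / 2 ^ (t.length + 1)) * Pt) := by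
            apply mul_le_mul_of_nonneg_left hkey
            positivity
        _ = (Real.exp 1 - 1) * (2 - 2 / 2 ^ (t.length + 1))
              * ((x.2 : ℝ) * ((x.1)! : ℝ) * Pt) := by ring

/-- `f ((n₁,α₁),…,(n_p,α_p)) ≤ 2 (e-1) ∏ αᵢ nᵢ!`. -/
theorem f_bound_two (L : List (ℕ × ℕ)) (hL : L ≠ [])
    (h : ∀ x ∈ L, 2 ≤ x.1 ∧ 1 ≤ x.2) :
    f L ≤ 2 * (Real.exp 1 - 1) * (L.map fun x => (x.2 : ℝ) * ((x.1)! : ℝ)).prod := by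
  have hkey := f_key L hL h
  have hP : (0:ℝ) ≤ (L.map fun x => (x.2 : ℝ) * ((x.1)! : ℝ)).prod :=
    le_trans (by positivity) (prod_ge L h)
  have he := exp_sub_one_pos
  have h2 : (Real.exp 1 - 1) * (2 - 2 / 2 ^ L.length) ≤ 2 * (Real.exp 1 - 1) := by
    have : (0:ℝ) < 2 / 2 ^ L.length := by positivity
    nlinarith
  calc f L ≤ _ := hkey
    _ ≤ 2 * (Real.exp 1 - 1) * (L.map fun x => (x.2 : ℝ) * ((x.1)! : ℝ)).prod :=
      mul_le_mul_of_nonneg_right h2 hP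
end

section
/- Let m > n ≥ 2 be integers, α ≥ 1 and β ≥ 2. Then Δf = β·a_n·(α·m! − 1) − α·a_m·(β·n! − 1) < 0, where a_k = k!·∑_{i=1}^{k−1} 1/i!. -/
open Nat Finset

lemma sum_inv_fact_le (k : ℕ) (hk : 1 ≤ k) :
    ∑ i ∈ Finset.Icc 1 k, (1 : ℝ) / (i !) ≤ 2 - 1 / k := by
  induction k with
  | zero => omega
  | succ k ih =>
    rcases Nat.eq_zero_or_pos k with h | hpos
    · subst h
      simp [Nat.factorial]
      norm_num
    · rw [Finset.sum_Icc_succ_top (by omega : 1 ≤ k + 1)]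
      have hk0 : (0:ℝ) < k := by exact_mod_cast hpos
      have hfac : (k:ℝ) * (k+1) ≤ ((k+1)! : ℝ) := by
        have h1 : k * (k+1) ≤ (k+1)! := by
          rw [Nat.factorial_succ]
          have := Nat.self_le_factorial k
          nlinarith
        exact_mod_cast h1
      have h2 : (1:ℝ)/((k+1)!) ≤ 1/k - 1/(k+1) := by
        have heq : (1:ℝ)/k - 1/(k+1) = 1/(k*(k+1)) := by
          rw [div_sub_div _ _ hk0.ne' (by positivity : ((k:ℝ)+1) ≠ 0)]
          norm_num
        rw [heq]
        apply one_div_le_one_div_of_le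
        · positivity
        · exact hfac
      have h3 := ih hpos
      push_cast at h2 h3 ⊢
      linarith

lemma one_le_sum_inv_fact (k : ℕ) (hk : 1 ≤ k) :
    (1 : ℝ) ≤ ∑ i ∈ Finset.Icc 1 k, (1 : ℝ) / (i !) := by
  have h1 : (1:ℕ) ∈ Finset.Icc 1 k := by simp [hk]
  have := Finset.single_le_sum (f := fun i : ℕ => (1:ℝ)/(i !))
    (fun i _ => by positivity) h1
  simpa [Nat.factorial] using this

/-- For `m > n ≥ 2`, `α ≥ 1`, `β ≥ 2`: `Δf = β a n (α m! - 1) - α a m (β n! - 1) < 0`. -/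
theorem deltaf_neg (m n α β : ℕ) (hn : 2 ≤ n) (hmn : n < m) (hα : 1 ≤ α) (hβ : 2 ≤ β) :
    (β : ℝ) * a n * ((α : ℝ) * (m ! : ℝ) - 1) - (α : ℝ) * a m * ((β : ℝ) * (n ! : ℝ) - 1)
      < 0 := by
  have hM1 : (1:ℝ) ≤ (m ! : ℝ) := by
    exact_mod_cast Nat.one_le_iff_ne_zero.mpr (Nat.factorial_ne_zero m)
  have hN2 : (2:ℝ) ≤ (n ! : ℝ) := by
    have h := Nat.self_le_factorial n
    have : 2 ≤ n ! := le_trans hn h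
    exact_mod_cast this
  have hNn1 : ((n:ℝ) - 1) ≤ (n ! : ℝ) := by
    have h1 : n - 1 ≤ n ! := le_trans (by omega) (Nat.self_le_factorial n)
    have h2 : ((n-1:ℕ):ℝ) ≤ (n ! : ℝ) := by exact_mod_cast h1
    have hcast : ((n - 1 : ℕ) : ℝ) = (n:ℝ) - 1 := by
      have h3 : 1 ≤ n := by omega
      push_cast [h3]; ring
    linarith [hcast ▸ h2]
  set s : ℝ := ∑ i ∈ Finset.Icc 1 (n - 1), (1 : ℝ) / (i !) with hs
  set t : ℝ := ∑ i ∈ Finset.Icc 1 (m - 1), (1 : ℝ) / (i !) with ht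
  set N : ℝ := (n ! : ℝ) with hN
  set M : ℝ := (m ! : ℝ) with hM
  have hN0 : (0:ℝ) < N := by linarith
  -- s ≥ 1
  have hs1 : (1:ℝ) ≤ s := one_le_sum_inv_fact _ (by omega)
  -- s ≤ 2 - 1/(n-1)
  have hs2 : s ≤ 2 - 1 / ((n:ℝ) - 1) := by
    have h := sum_inv_fact_le (n - 1) (by omega)
    have hcast : ((n - 1 : ℕ) : ℝ) = (n:ℝ) - 1 := by
      have h3 : 1 ≤ n := by omega
      push_cast [h3]; ring
    rwa [hcast] at h
  -- t ≥ s + 1/n!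
  have hts : s + 1 / N ≤ t := by
    have hsub : Finset.Icc 1 n ⊆ Finset.Icc 1 (m - 1) := by
      intro x hx
      simp only [Finset.mem_Icc] at hx ⊢
      omega
    have hn1 : n - 1 + 1 = n := by omega
    have hstep : ∑ i ∈ Finset.Icc 1 n, (1:ℝ)/(i !) = s + 1 / N := by
      rw [hs, hN, ← hn1, Finset.sum_Icc_succ_top (by omega : 1 ≤ n - 1 + 1)]
      simp
    calc s + 1 / N = ∑ i ∈ Finset.Icc 1 n, (1:ℝ)/(i !) := hstep.symm
      _ ≤ t := Finset.sum_le_sum_of_subset_of_nonneg hsub (fun i _ _ => by positivity)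
  have hαR : (1:ℝ) ≤ (α:ℝ) := by exact_mod_cast hα
  have hβR : (2:ℝ) ≤ (β:ℝ) := by exact_mod_cast hβ
  -- s * N ≤ β * N - 1
  have hsB : s * N ≤ (β:ℝ) * N - 1 := by
    have hn1R : (1:ℝ) ≤ (n:ℝ) - 1 := by
      have h4 : (2:ℝ) ≤ (n:ℝ) := by exact_mod_cast hn
      linarith
    have h1 : s * N ≤ (2 - 1 / ((n:ℝ) - 1)) * N :=
      mul_le_mul_of_nonneg_right hs2 hN0.le
    have h2 : (1:ℝ) ≤ N / ((n:ℝ) - 1) := by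
      rw [le_div_iff₀ (by linarith)]
      linarith
    have h3 : (2 - 1 / ((n:ℝ) - 1)) * N = 2 * N - N / ((n:ℝ)-1) := by
      field_simp
    nlinarith
  set A : ℝ := (α:ℝ) * M with hA
  set B : ℝ := (β:ℝ) * N with hB
  have hA1 : (1:ℝ) ≤ A := by rw [hA]; nlinarith
  have hB2 : (2:ℝ) ≤ B := by rw [hB]; nlinarith
  have e1 : s ≤ (1 / N) * (B - 1) := by
    rw [div_mul_eq_mul_div, le_div_iff₀ hN0]
    linarith
  have e2 : A * ((s + 1/N) * (B - 1)) ≤ A * (t * (B - 1)) := by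
    apply mul_le_mul_of_nonneg_left _ (by linarith)
    apply mul_le_mul_of_nonneg_right hts (by linarith)
  have e3 : A * s ≤ A * ((1/N) * (B - 1)) :=
    mul_le_mul_of_nonneg_left e1 (by linarith)
  have e5 : A * s * (B-1) + A * s ≤ A * (t * (B-1)) := by
    have hr : A * s * (B-1) + A * ((1/N) * (B-1)) = A * ((s + 1/N) * (B - 1)) := by ring
    linarith
  have hBs : (0:ℝ) < B * s := by nlinarith
  have hgoal : B * s * (A - 1) < A * (t * (B - 1)) := by
    calc B * s * (A-1) = A * s * (B-1) + A * s - B * s := by ring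
      _ < A * s * (B-1) + A * s := by linarith
      _ ≤ A * (t * (B-1)) := e5
  have hfin : (β:ℝ) * a n * ((α:ℝ) * M - 1) - (α:ℝ) * a m * ((β:ℝ) * N - 1)
      = B * s * (A - 1) - A * (t * (B - 1)) := by
    rw [a, a, ← hs, ← ht, ← hN, ← hM, hA, hB]; ring
  rw [hfin]
  linarith
end

section
/- The function n ↦ (1 + 1/n)·n!·r_n/(e − 1 − r_n), where r_n = ∑_{i=n}^{∞} 1/i!, is decreasing in n for n ≥ 4, and its value at n = 4 is strictly less than 1; consequently (n!−1)(1+1/n)·r_n/(e−1−r_n) < 1 for all n ≥ 4. -/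
open Nat Finset

/-- `r n = ∑_{i=n}^{∞} 1/i!`, the tail of the exponential series. -/
noncomputable def r (n : ℕ) : ℝ := ∑' i : ℕ, (1 : ℝ) / ((n + i)! : ℝ)

/-- `g n = (1 + 1/n) n! r n / (e - 1 - r n)`. -/
noncomputable def g (n : ℕ) : ℝ :=
  (1 + 1 / (n : ℝ)) * (n ! : ℝ) * r n / (Real.exp 1 - 1 - r n)

lemma summable_f : Summable (fun i : ℕ => (1:ℝ)/(i)!) := by
  simpa using Real.summable_pow_div_factorial 1

lemma summable_shift (n : ℕ) : Summable (fun i : ℕ => (1:ℝ)/((n+i)!)) := by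
  have := (summable_nat_add_iff n).2 summable_f
  simpa [add_comm] using this

lemma exp_eq : Real.exp 1 = ∑' i : ℕ, (1:ℝ)/(i)! := by
  rw [Real.exp_eq_exp_ℝ, NormedSpace.exp_eq_tsum_div]
  simp [one_div]

lemma r_eq (n : ℕ) : r n = Real.exp 1 - ∑ i ∈ range n, (1:ℝ)/(i)! := by
  have hs : Summable (fun i : ℕ => (1:ℝ)/((i+n)!)) := by
    simpa [add_comm] using summable_shift n
  have h := Summable.sum_add_tsum_nat_add' (f := fun i : ℕ => (1:ℝ)/(i)!) (k := n) hs
  rw [exp_eq, r]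
  have : (∑' i : ℕ, (1:ℝ)/((n+i)!)) = ∑' i : ℕ, (1:ℝ)/((i+n)!) := by
    congr 1; ext i; rw [add_comm]
  rw [this]; linarith [h]

lemma r_succ (n : ℕ) : r n = 1/(n ! : ℝ) + r (n+1) := by
  rw [r_eq, r_eq, sum_range_succ]; ring

lemma r_pos (n : ℕ) : 0 < r n := by
  rw [r]
  apply Summable.tsum_pos (summable_shift n) (fun i => by positivity) 0
  positivity

lemma r_le (n : ℕ) (hn : 1 ≤ n) : r n ≤ (n+1)/((n : ℝ) * (n !)) := by
  have hn0 : (0:ℝ) < n := by exact_mod_cast hn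
  have hgeo : Summable (fun i : ℕ => (1/(n ! : ℝ)) * (1/(n+1 : ℝ))^i) := by
    apply Summable.mul_left
    apply summable_geometric_of_lt_one (by positivity)
    rw [div_lt_one (by positivity)]; linarith
  have hle : ∀ i : ℕ, (1:ℝ)/((n+i)!) ≤ (1/(n ! : ℝ)) * (1/(n+1 : ℝ))^i := by
    intro i
    have heq : (1:ℝ)/(n ! :ℝ) * (1/((n:ℝ)+1))^i = 1/((n ! :ℝ) * ((n:ℝ)+1)^i) := by
      field_simp
      rw [← mul_pow, one_div, inv_mul_cancel₀ (by positivity), one_pow]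
    rw [heq, div_le_div_iff₀ (by positivity) (by positivity), one_mul, one_mul]
    have := Nat.factorial_mul_pow_le_factorial (m := n) (n := i)
    calc ((n !:ℝ)) * (n+1:ℝ)^i = ((n ! * (n+1)^i : ℕ) : ℝ) := by push_cast; ring
      _ ≤ (((n+i)! : ℕ) : ℝ) := by exact_mod_cast this
      _ = _ := by norm_cast
  calc r n ≤ ∑' i : ℕ, (1/(n ! : ℝ)) * (1/(n+1 : ℝ))^i :=
        Summable.tsum_le_tsum hle (summable_shift n) hgeo
    _ = (1/(n ! : ℝ)) * (1 - 1/(n+1:ℝ))⁻¹ := by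
        rw [tsum_mul_left, tsum_geometric_of_lt_one (by positivity)
          (by rw [div_lt_one (by positivity)]; linarith)]
    _ = (n+1)/((n : ℝ) * (n !)) := by
        have hn' : (1:ℝ) ≤ n := by exact_mod_cast hn
        have h1 : ((1:ℝ) - 1/(n+1)) = n/(n+1) := by field_simp; ring
        rw [h1]
        rw [inv_div]
        field_simp
        try ring
        try tauto

lemma r_lt_top (n : ℕ) (hn : 2 ≤ n) : r n < Real.exp 1 - 1 := by
  rw [r_eq]
  have : (2:ℝ) ≤ ∑ i ∈ range n, (1:ℝ)/(i)! := by
    calc (2:ℝ) = ∑ i ∈ range 2, (1:ℝ)/(i)! := by norm_num [sum_range_succ]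
      _ ≤ _ := by
        apply sum_le_sum_of_subset_of_nonneg
        · exact range_subset_range.2 hn
        · intro i _ _; positivity
  linarith

lemma b_pos (n : ℕ) (hn : 2 ≤ n) : 0 < Real.exp 1 - 1 - r n := by
  have := r_lt_top n hn; linarith

lemma step_algebra (N F s B : ℝ) (hN : 4 ≤ N) (hF : 0 < F) (hs : 0 < s)
    (hBpos : 0 < B) (hsle : s ≤ (N+2) / ((N+1) * ((N+1)*F))) :
    (1 + 1/(N+1)) * ((N+1)*F) * s * B ≤ (1 + 1/N) * F * (1/F + s) * (B + 1/F) := by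
  have hN0 : (0:ℝ) < N := by linarith
  have hN1 : (0:ℝ) < N + 1 := by linarith
  have hFinv : F * (1/F) = 1 := by field_simp
  have core : (N^2+N-1) * F * s * B ≤ (N+1) * (B + 1/F + s) := by
    have hFs : (N+1)^2 * (F * s) ≤ (N+2) := by
      have h1 : s * ((N+1) * ((N+1)*F)) ≤ (N+2) :=
        (le_div_iff₀ (by positivity)).1 hsle
      nlinarith [h1]
    have hF1 : (0:ℝ) < 1/F := by positivity
    have hc1 : (0:ℝ) ≤ N^2+N-1 := by nlinarith
    have h2 : (N+1)^2 * (F*s) * B ≤ (N+2) * B := by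
      have := mul_le_mul_of_nonneg_right hFs hBpos.le; linarith
    have h3 := mul_le_mul_of_nonneg_left h2 hc1
    have h4 : (N^2+N-1) * ((N+2) * B) ≤ (N+1)^2 * ((N+1)*B) := by nlinarith [hBpos, hN]
    have h5 : (N+1)^2 * ((N^2+N-1) * F * s * B) ≤ (N+1)^2 * ((N+1)*B) := by
      nlinarith [h3, h4]
    have h6 : (N^2+N-1) * F * s * B ≤ (N+1)*B :=
      le_of_mul_le_mul_left h5 (by positivity)
    nlinarith [h6, mul_pos (show (0:ℝ) < N+1 by linarith)
      (show (0:ℝ) < 1/F + s by linarith)]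
  have expand1 : (1 + 1/(N+1)) * ((N+1)*F) * s * B = (N+2) * F * s * B := by
    field_simp; ring
  have expand2 : (1 + 1/N) * F * (1/F + s) * (B + 1/F)
      = (N+1)/N * ((1 + F*s) * (B + 1/F)) := by
    have : F * (1/F + s) = 1 + F * s := by field_simp
    rw [mul_assoc (1+1/N) F, this]
    field_simp
  rw [expand1, expand2]
  rw [show (N+1)/N * ((1 + F*s) * (B + 1/F)) = ((N+1) * ((1 + F*s) * (B + 1/F)))/N by ring,
    le_div_iff₀ hN0]
  have hsF : F * s * (1/F) = s := by
    rw [mul_comm F s, mul_assoc, hFinv, mul_one]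
  nlinarith [core, hsF, mul_pos hF hs]

lemma g_step (n : ℕ) (hn : 4 ≤ n) : g (n+1) ≤ g n := by
  have hN : (4:ℝ) ≤ (n:ℝ) := by exact_mod_cast hn
  have hF : (0:ℝ) < (n ! : ℝ) := by positivity
  have hB : 0 < Real.exp 1 - 1 - r n := b_pos n (by omega)
  have hB' : 0 < Real.exp 1 - 1 - r (n+1) := b_pos (n+1) (by omega)
  have hs : 0 < r (n+1) := r_pos (n+1)
  have hrn : r n = 1/(n ! : ℝ) + r (n+1) := r_succ n
  have hcast : ((n+1)! : ℝ) = ((n:ℝ)+1) * (n ! : ℝ) := by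
    push_cast [Nat.factorial_succ]; ring
  have hsle : r (n+1) ≤ ((n:ℝ)+2) / (((n:ℝ)+1) * (((n:ℝ)+1)*(n ! : ℝ))) := by
    have h := r_le (n+1) (by omega)
    calc r (n+1) ≤ ((n:ℝ)+1+1)/(((n:ℝ)+1) * ((n+1)! : ℝ)) := by push_cast at h ⊢; exact h
      _ = ((n:ℝ)+2) / (((n:ℝ)+1) * (((n:ℝ)+1)*(n ! : ℝ))) := by rw [hcast]; ring_nf
  have key := step_algebra (n:ℝ) (n ! : ℝ) (r (n+1)) (Real.exp 1 - 1 - r n)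
    hN hF hs hB hsle
  rw [g, g, div_le_div_iff₀ hB' hB]
  have hB'eq : Real.exp 1 - 1 - r (n+1) = (Real.exp 1 - 1 - r n) + 1/(n ! : ℝ) := by
    rw [hrn]; ring
  push_cast
  rw [hB'eq, hcast]
  calc (1 + 1/((n:ℝ)+1)) * (((n:ℝ)+1) * (n ! : ℝ)) * r (n+1) * (Real.exp 1 - 1 - r n)
      ≤ (1 + 1/(n:ℝ)) * (n ! : ℝ) * (1/(n ! : ℝ) + r (n+1)) * ((Real.exp 1 - 1 - r n) + 1/(n ! : ℝ)) := key
    _ = (1 + 1/(n:ℝ)) * (n ! : ℝ) * r n * ((Real.exp 1 - 1 - r n) + 1/(n ! : ℝ)) := by rw [hrn]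

lemma g_mono (m n : ℕ) (hm : 4 ≤ m) (hmn : m ≤ n) : g n ≤ g m := by
  induction n, hmn using Nat.le_induction with
  | base => exact le_refl _
  | succ n hmn ih => exact (g_step n (le_trans hm hmn)).trans ih

lemma g4_lt : g 4 < 1 := by
  have hr4 : r 4 ≤ 5/96 := by
    have h := r_le 4 (by norm_num)
    norm_num [Nat.factorial] at h
    convert h using 2 <;> norm_num
  have hb : 0 < Real.exp 1 - 1 - r 4 := b_pos 4 (by norm_num)
  rw [g, div_lt_one hb]
  have he := Real.exp_one_gt_d9
  have h24 : ((4:ℕ)! : ℝ) = 24 := by norm_num [Nat.factorial]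
  have hc : ((4:ℕ):ℝ) = 4 := by norm_num
  rw [h24, hc]
  norm_num
  linarith

/-- `g` is decreasing for `n ≥ 4`, `g 4 < 1`, and consequently
`(n! - 1)(1 + 1/n) r n / (e - 1 - r n) < 1` for all `n ≥ 4`. -/
theorem g_decreasing_lt_one :
    (∀ m n : ℕ, 4 ≤ m → m ≤ n → g n ≤ g m) ∧ g 4 < 1 ∧
    ∀ n : ℕ, 4 ≤ n →
      ((n ! : ℝ) - 1) * (1 + 1 / (n : ℝ)) * r n / (Real.exp 1 - 1 - r n) < 1 := by
  refine ⟨fun m n hm hmn => g_mono m n hm hmn, g4_lt, fun n hn => ?_⟩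
  have hb : 0 < Real.exp 1 - 1 - r n := b_pos n (by omega)
  have hn4 : (4:ℝ) ≤ (n:ℝ) := by exact_mod_cast hn
  have hn0 : (0:ℝ) < (n:ℝ) := by linarith
  have hP : 0 < (1 + 1/(n:ℝ)) * r n := by
    have := r_pos n
    have h1 : (0:ℝ) < 1 + 1/(n:ℝ) := by positivity
    positivity
  have hnum : ((n ! : ℝ) - 1) * (1 + 1/(n:ℝ)) * r n < (1 + 1/(n:ℝ)) * (n ! : ℝ) * r n := by
    nlinarith [hP]
  calc ((n ! : ℝ) - 1) * (1 + 1 / (n : ℝ)) * r n / (Real.exp 1 - 1 - r n)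
      < (1 + 1/(n:ℝ)) * (n ! : ℝ) * r n / (Real.exp 1 - 1 - r n) := by
        exact div_lt_div_of_pos_right hnum hb
    _ = g n := rfl
    _ ≤ g 4 := g_mono 4 n (le_refl 4) hn
    _ < 1 := g4_lt
end
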